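/- Let Z be a sparsity pattern with associated digraph G, and let k ≥ 0 and q ≥ 1 be integers. Then the maximum flow value θ̂(k,q) on the unit-capacity digraph 𝒢̂ equals the maximum flow value θ(k,q) on the weighted digraph 𝒢. -/

import Mathlib

/-- A flow on a finite capacitated digraph (capacity `0` encodes the absence of an edge):
nonnegative, below capacity, and conserved at every node other than `s` and `t`. -/
def IsFlow {V : Type*} [Fintype V] (c : V → V → ℝ) (s t : V) (f : V → V → ℝ) : Prop :=
  (∀ u v, 0 ≤ f u v) ∧ (∀ u v, f u v ≤ c u v) ∧
    ∀ v, v ≠ s → v ≠ t → (∑ u, f u v) = ∑ w, f v w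

/-- The value of a flow: total flow on edges leaving the source `s`. -/
def flowValue {V : Type*} [Fintype V] (s : V) (f : V → V → ℝ) : ℝ := ∑ w, f s w

/-- The maximum flow value: the supremum of the values of all flows. -/
noncomputable def maxFlow {V : Type*} [Fintype V] (c : V → V → ℝ) (s t : V) : ℝ :=
  sSup {x : ℝ | ∃ f, IsFlow c s t f ∧ x = flowValue s f}

/-- The node set of the weighted digraph `𝒢`: source `s`, sink `t`, nodes `λ_i`
(copies of the control nodes), `ν_j` and `μ_j` (two copies of the state nodes). -/
inductive GNode (n m : ℕ) where
  | s : GNode n m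
  | t : GNode n m
  | lam : Fin m → GNode n m
  | nu : Fin n → GNode n m
  | mu : Fin n → GNode n m
deriving DecidableEq, Fintype

/-- The capacities of the weighted digraph `𝒢` built from `Z` and `(k, q)`. -/
def capG {n m : ℕ} (Z : Finset (Fin n × (Fin n ⊕ Fin m))) (k q : ℕ) :
    GNode n m → GNode n m → ℝ
  | .s, .lam _ => (k + 1 : ℕ)
  | .s, .nu _ => (q * (k + 1) : ℕ)
  | .lam i, .mu j => if (j, Sum.inr i) ∈ Z then ((k + 1 : ℕ) : ℝ) else 0
  | .nu i, .mu j => if (j, Sum.inl i) ∈ Z then ((q * (k + 1) : ℕ) : ℝ) else 0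
  | .mu _, .t => (q : ℕ)
  | _, _ => 0


/-- The node set of the unit-capacity digraph `𝒢̂`: source `s`, sink `t`, nodes
`λ_{ℓi}`, `ν_{ℓpj}` and `μ_{pj}`. -/
inductive HNode (n m k q : ℕ) where
  | s : HNode n m k q
  | t : HNode n m k q
  | lam : Fin (k + 1) → Fin m → HNode n m k q
  | nu : Fin (k + 1) → Fin q → Fin n → HNode n m k q
  | mu : Fin q → Fin n → HNode n m k q
deriving DecidableEq, Fintype

/-- The (unit) capacities of the digraph `𝒢̂` built from `Z` and `(k, q)`. -/
def capH {n m : ℕ} (Z : Finset (Fin n × (Fin n ⊕ Fin m))) (k q : ℕ) :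
    HNode n m k q → HNode n m k q → ℝ
  | .s, .lam _ _ => 1
  | .s, .nu _ _ _ => 1
  | .lam _ i, .mu _ j => if (j, Sum.inr i) ∈ Z then 1 else 0
  | .nu _ p i, .mu p' j => if p = p' ∧ (j, Sum.inl i) ∈ Z then 1 else 0
  | .mu _ _, .t => 1
  | _, _ => 0

/-!
The network `𝒢̂` is `𝒢` with every node blown up into copies: `λ_i` into `k + 1` copies,
`ν_j` into `(k + 1) q` copies and `μ_j` into `q` copies, all edges having capacity one.
Summing a flow on `𝒢̂` over the fibres of the projection `𝒢̂ → 𝒢` gives a flow on `𝒢` of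
the same value: an edge of `𝒢` leaving `s` or entering `t` has exactly the total capacity of its
copies, and the remaining edges `λ_i → μ_j`, `ν_i → μ_j` are then bounded by conservation,
because `λ_i` and `ν_i` receive flow only from `s`. Conversely a flow on `𝒢` spread evenly over
the copies is a flow on `𝒢̂` of the same value. So both networks have the same flow values.
-/

section Flows

variable {V : Type*} [Fintype V]

theorem IsFlow.eq_zero_of_cap_eq_zero {c f : V → V → ℝ} {s t : V} (hf : IsFlow c s t f)
    {u v : V} (h : c u v = 0) : f u v = 0 :=
  le_antisymm (h ▸ hf.2.1 u v) (hf.1 u v)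

theorem maxFlow_eq_of_exists_flow {W : Type*} [Fintype W] {c : V → V → ℝ} {d : W → W → ℝ}
    {s t : V} {s' t' : W}
    (hcd : ∀ f, IsFlow c s t f → ∃ g, IsFlow d s' t' g ∧ flowValue s' g = flowValue s f)
    (hdc : ∀ g, IsFlow d s' t' g → ∃ f, IsFlow c s t f ∧ flowValue s f = flowValue s' g) :
    maxFlow c s t = maxFlow d s' t' := by
  unfold maxFlow
  congr 1
  ext x
  constructor
  · rintro ⟨f, hf, rfl⟩
    obtain ⟨g, hg, hval⟩ := hcd f hf
    exact ⟨g, hg, hval.symm⟩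
  · rintro ⟨g, hg, rfl⟩
    obtain ⟨f, hf, hval⟩ := hdc g hg
    exact ⟨f, hf, hval.symm⟩

theorem apply_le_of_single_in_edge {g : V → V → ℝ} (hg : ∀ u v, 0 ≤ g u v) {s x : V}
    (hx : ∑ u, g u x = ∑ w, g x w) (hin : ∀ u, u ≠ s → g u x = 0) (w : V) :
    g x w ≤ g s x :=
  calc g x w ≤ ∑ w, g x w := Finset.single_le_sum (fun w _ => hg x w) (Finset.mem_univ w)
    _ = ∑ u, g u x := hx.symm
    _ = g s x := Finset.sum_eq_single s (fun u _ hu => hin u hu) (by simp)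

variable {W : Type*} [DecidableEq W]

def pushFlow (π : V → W) (f : V → V → ℝ) (a b : W) : ℝ :=
  ∑ u with π u = a, ∑ v with π v = b, f u v

variable {π : V → W} {f : V → V → ℝ}

theorem pushFlow_nonneg (hf : ∀ u v, 0 ≤ f u v) (a b : W) : 0 ≤ pushFlow π f a b :=
  Finset.sum_nonneg fun _ _ => Finset.sum_nonneg fun _ _ => hf _ _

theorem pushFlow_mono {f' : V → V → ℝ} (h : ∀ u v, f u v ≤ f' u v) (a b : W) :
    pushFlow π f a b ≤ pushFlow π f' a b :=
  Finset.sum_le_sum fun _ _ => Finset.sum_le_sum fun _ _ => h _ _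

variable [Fintype W]

theorem sum_pushFlow_left (b : W) :
    ∑ a, pushFlow π f a b = ∑ v with π v = b, ∑ u, f u v := by
  simp only [pushFlow]
  rw [Finset.sum_fiberwise _ π fun u => ∑ v with π v = b, f u v]
  exact Finset.sum_comm

theorem sum_pushFlow_right (a : W) :
    ∑ b, pushFlow π f a b = ∑ u with π u = a, ∑ w, f u w := by
  simp only [pushFlow]
  rw [Finset.sum_comm]
  exact Finset.sum_congr rfl fun u _ => Finset.sum_fiberwise _ π (f u)

theorem pushFlow_conservation {s t : V} (hf : ∀ v, v ≠ s → v ≠ t → ∑ u, f u v = ∑ w, f v w)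
    (b : W) (hbs : b ≠ π s) (hbt : b ≠ π t) :
    ∑ a, pushFlow π f a b = ∑ c, pushFlow π f b c := by
  rw [sum_pushFlow_left, sum_pushFlow_right]
  refine Finset.sum_congr rfl fun v hv => hf v ?_ ?_ <;> rintro rfl <;> simp_all

theorem flowValue_pushFlow {s : V} (hs : ∀ u, π u = π s → u = s) :
    flowValue (π s) (pushFlow π f) = flowValue s f := by
  rw [flowValue, sum_pushFlow_right, flowValue]
  exact Finset.sum_eq_single_of_mem s (by simp) fun u hu hne =>
    absurd (hs u (by simpa using hu)) hne

end Flows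

namespace GNode

variable {n m : ℕ}

def equivSum (n m : ℕ) : Unit ⊕ Unit ⊕ Fin m ⊕ Fin n ⊕ Fin n ≃ GNode n m where
  toFun
    | .inl _ => .s
    | .inr (.inl _) => .t
    | .inr (.inr (.inl i)) => .lam i
    | .inr (.inr (.inr (.inl j))) => .nu j
    | .inr (.inr (.inr (.inr j))) => .mu j
  invFun
    | .s => .inl ()
    | .t => .inr (.inl ())
    | .lam i => .inr (.inr (.inl i))
    | .nu j => .inr (.inr (.inr (.inl j)))
    | .mu j => .inr (.inr (.inr (.inr j)))
  left_inv := by rintro (_ | _ | _ | _ | _) <;> rfl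
  right_inv := by rintro (_ | _ | _ | _ | _) <;> rfl

theorem sum_eq (F : GNode n m → ℝ) :
    ∑ x, F x = F .s + F .t + ∑ i, F (.lam i) + ∑ j, F (.nu j) + ∑ j, F (.mu j) := by
  rw [← (equivSum n m).sum_comp F]
  simp [Fintype.sum_sum_type, equivSum, add_assoc]

end GNode

namespace HNode

variable {n m k q : ℕ}

def equivSum (n m k q : ℕ) :
    Unit ⊕ Unit ⊕ (Fin (k + 1) × Fin m) ⊕ (Fin (k + 1) × Fin q × Fin n) ⊕ (Fin q × Fin n)
      ≃ HNode n m k q where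
  toFun
    | .inl _ => .s
    | .inr (.inl _) => .t
    | .inr (.inr (.inl (l, i))) => .lam l i
    | .inr (.inr (.inr (.inl (l, p, j)))) => .nu l p j
    | .inr (.inr (.inr (.inr (p, j)))) => .mu p j
  invFun
    | .s => .inl ()
    | .t => .inr (.inl ())
    | .lam l i => .inr (.inr (.inl (l, i)))
    | .nu l p j => .inr (.inr (.inr (.inl (l, p, j))))
    | .mu p j => .inr (.inr (.inr (.inr (p, j))))
  left_inv := by rintro (_ | _ | ⟨_, _⟩ | ⟨_, _, _⟩ | ⟨_, _⟩) <;> rfl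
  right_inv := by rintro (_ | _ | _ | _ | _) <;> rfl

theorem sum_eq (F : HNode n m k q → ℝ) :
    ∑ x, F x = F .s + F .t + ∑ l, ∑ i, F (.lam l i) + ∑ l, ∑ p, ∑ j, F (.nu l p j)
      + ∑ p, ∑ j, F (.mu p j) := by
  rw [← (equivSum n m k q).sum_comp F]
  simp [Fintype.sum_sum_type, Fintype.sum_prod_type, equivSum, add_assoc]

def proj : HNode n m k q → GNode n m
  | .s => .s
  | .t => .t
  | .lam _ i => .lam i
  | .nu _ _ j => .nu j
  | .mu _ j => .mu j

@[simp]
theorem sum_proj_eq_s (F : HNode n m k q → ℝ) : ∑ u with u.proj = .s, F u = F .s := by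
  rw [Finset.sum_filter, sum_eq]; simp [proj]

@[simp]
theorem sum_proj_eq_t (F : HNode n m k q → ℝ) : ∑ u with u.proj = .t, F u = F .t := by
  rw [Finset.sum_filter, sum_eq]; simp [proj]

@[simp]
theorem sum_proj_eq_lam (F : HNode n m k q → ℝ) (i : Fin m) :
    ∑ u with u.proj = .lam i, F u = ∑ l, F (.lam l i) := by
  rw [Finset.sum_filter, sum_eq]; simp [proj]

@[simp]
theorem sum_proj_eq_nu (F : HNode n m k q → ℝ) (j : Fin n) :
    ∑ u with u.proj = .nu j, F u = ∑ l, ∑ p, F (.nu l p j) := by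
  rw [Finset.sum_filter, sum_eq]; simp [proj]

@[simp]
theorem sum_proj_eq_mu (F : HNode n m k q → ℝ) (j : Fin n) :
    ∑ u with u.proj = .mu j, F u = ∑ p, F (.mu p j) := by
  rw [Finset.sum_filter, sum_eq]; simp [proj]

end HNode

section Networks

variable {n m : ℕ} {Z : Finset (Fin n × (Fin n ⊕ Fin m))} {k q : ℕ}

theorem capH_eq_zero_of_capG_eq_zero {u v : HNode n m k q}
    (h : capG Z k q u.proj v.proj = 0) : capH Z k q u v = 0 := by
  rcases q.eq_zero_or_pos with rfl | hq
  · cases u <;> cases v <;> first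
      | exact Fin.elim0 ‹_›
      | simp_all [capG, capH, HNode.proj, Nat.cast_add_one_ne_zero]
  · cases u <;> cases v <;> simp_all [capG, capH, HNode.proj, Nat.cast_add_one_ne_zero, hq.ne']

theorem isFlow_capG_of_source_sink_le {g : GNode n m → GNode n m → ℝ}
    (hnn : ∀ u v, 0 ≤ g u v)
    (hcons : ∀ v, v ≠ .s → v ≠ .t → ∑ u, g u v = ∑ w, g v w)
    (hzero : ∀ u v, capG Z k q u v = 0 → g u v = 0)
    (hs : ∀ v, g .s v ≤ capG Z k q .s v) (ht : ∀ u, g u .t ≤ capG Z k q u .t) :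
    IsFlow (capG Z k q) .s .t g := by
  have hmid : ∀ x w, x ≠ .s → x ≠ .t → (∀ u, u ≠ .s → capG Z k q u x = 0) → g x w ≤ g .s x :=
    fun x w hxs hxt hin =>
      apply_le_of_single_in_edge hnn (hcons x hxs hxt) (fun u hu => hzero u x (hin u hu)) w
  refine ⟨hnn, fun u v => ?_, hcons⟩
  by_cases h0 : capG Z k q u v = 0
  · exact (hzero u v h0).le.trans h0.ge
  cases u <;> cases v <;> first | exact hs _ | exact ht _ | exact absurd rfl h0 | skip
  case lam.mu i j =>
    calc g (.lam i) (.mu j) ≤ g .s (.lam i) := hmid _ _ (by simp) (by simp) fun u hu => by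
          cases u <;> first | rfl | exact absurd rfl hu
      _ ≤ capG Z k q .s (.lam i) := hs _
      _ = capG Z k q (.lam i) (.mu j) := by simp_all [capG]
  case nu.mu i j =>
    calc g (.nu i) (.mu j) ≤ g .s (.nu i) := hmid _ _ (by simp) (by simp) fun u hu => by
          cases u <;> first | rfl | exact absurd rfl hu
      _ ≤ capG Z k q .s (.nu i) := hs _
      _ = capG Z k q (.nu i) (.mu j) := by simp_all [capG]

theorem pushFlow_proj_capH_source (v : GNode n m) :
    pushFlow HNode.proj (capH Z k q) .s v = capG Z k q .s v := by
  cases v <;> simp [pushFlow, capH, capG, mul_comm]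

theorem pushFlow_proj_capH_sink (u : GNode n m) :
    pushFlow HNode.proj (capH Z k q) u .t = capG Z k q u .t := by
  cases u <;> simp [pushFlow, capH, capG]

theorem isFlow_pushFlow_proj {f : HNode n m k q → HNode n m k q → ℝ}
    (hf : IsFlow (capH Z k q) .s .t f) :
    IsFlow (capG Z k q) .s .t (pushFlow HNode.proj f) := by
  refine isFlow_capG_of_source_sink_le (pushFlow_nonneg hf.1)
    (pushFlow_conservation (π := HNode.proj) hf.2.2) (fun a b h => ?_) (fun v => ?_) (fun u => ?_)
  · refine Finset.sum_eq_zero fun u hu => Finset.sum_eq_zero fun v hv => ?_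
    rw [Finset.mem_filter] at hu hv
    exact hf.eq_zero_of_cap_eq_zero (capH_eq_zero_of_capG_eq_zero (hu.2 ▸ hv.2 ▸ h))
  · exact (pushFlow_mono hf.2.1 _ _).trans (pushFlow_proj_capH_source v).le
  · exact (pushFlow_mono hf.2.1 _ _).trans (pushFlow_proj_capH_sink u).le

theorem flowValue_pushFlow_proj (f : HNode n m k q → HNode n m k q → ℝ) :
    flowValue .s (pushFlow HNode.proj f) = flowValue .s f :=
  flowValue_pushFlow (s := HNode.s) fun u hu => by cases u <;> simp_all [HNode.proj]

/-- Each edge `λ_i → μ_j` or `ν_i → μ_j` of `𝒢` has `(k + 1) q` copies in `𝒢̂`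
(`ν_{ℓpi} → μ_{p'j}` only for `p = p'`), which share its flow equally. -/
noncomputable def splitFlow (k q : ℕ) (g : GNode n m → GNode n m → ℝ) :
    HNode n m k q → HNode n m k q → ℝ
  | .s, .lam _ i => g .s (.lam i) / (k + 1)
  | .s, .nu _ _ j => g .s (.nu j) / ((k + 1) * q)
  | .lam _ i, .mu _ j => g (.lam i) (.mu j) / ((k + 1) * q)
  | .nu _ p i, .mu p' j => if p = p' then g (.nu i) (.mu j) / ((k + 1) * q) else 0
  | .mu _ j, .t => g (.mu j) .t / q
  | _, _ => 0

section Split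

variable {g : GNode n m → GNode n m → ℝ} (hg : IsFlow (capG Z k q) .s .t g)
include hg

theorem capG_flow_source_lam (i : Fin m) : g .s (.lam i) = ∑ j, g (.lam i) (.mu j) := by
  have h := hg.2.2 (.lam i) (by simp) (by simp)
  simpa (disch := unfold capG; rfl) [GNode.sum_eq, hg.eq_zero_of_cap_eq_zero] using h

theorem capG_flow_source_nu (j : Fin n) : g .s (.nu j) = ∑ i, g (.nu j) (.mu i) := by
  have h := hg.2.2 (.nu j) (by simp) (by simp)
  simpa (disch := unfold capG; rfl) [GNode.sum_eq, hg.eq_zero_of_cap_eq_zero] using h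

theorem capG_flow_mu_sink (j : Fin n) :
    ∑ i, g (.lam i) (.mu j) + ∑ i, g (.nu i) (.mu j) = g (.mu j) .t := by
  have h := hg.2.2 (.mu j) (by simp) (by simp)
  simpa (disch := unfold capG; rfl) [GNode.sum_eq, hg.eq_zero_of_cap_eq_zero] using h

theorem capG_flowValue : flowValue .s g = ∑ i, g .s (.lam i) + ∑ j, g .s (.nu j) := by
  simp (disch := unfold capG; rfl) [flowValue, GNode.sum_eq, hg.eq_zero_of_cap_eq_zero]

theorem splitFlow_conservation (hq : 0 < q) (v : HNode n m k q) (hvs : v ≠ .s) (hvt : v ≠ .t) :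
    ∑ u, splitFlow k q g u v = ∑ w, splitFlow k q g v w := by
  have hk : (k + 1 : ℝ) ≠ 0 := Nat.cast_add_one_ne_zero k
  have hq₀ : (q : ℝ) ≠ 0 := Nat.cast_ne_zero.2 hq.ne'
  cases v with
  | s => contradiction
  | t => contradiction
  | lam l i =>
    simp [HNode.sum_eq, splitFlow, ← Finset.sum_div, capG_flow_source_lam hg]
    field_simp
  | nu l p j =>
    simp [HNode.sum_eq, splitFlow, ← Finset.sum_div, capG_flow_source_nu hg]
  | mu p j =>
    simp [HNode.sum_eq, splitFlow, ← Finset.sum_div, ← capG_flow_mu_sink hg]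
    field_simp

theorem splitFlow_nonneg (u v : HNode n m k q) : 0 ≤ splitFlow k q g u v := by
  cases u <;> cases v <;> simp only [splitFlow] <;> try split
  all_goals first | exact le_rfl | exact div_nonneg (hg.1 _ _) (by positivity)

theorem splitFlow_le_capH (hq : 0 < q) (u v : HNode n m k q) :
    splitFlow k q g u v ≤ capH Z k q u v := by
  have hcap := hg.2.1
  have hk : (0 : ℝ) < k + 1 := by positivity
  have hq₁ : (1 : ℝ) ≤ q := by exact_mod_cast hq
  cases u <;> cases v <;> simp only [splitFlow, capH] <;> try exact le_rfl
  case s.lam l i =>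
    rw [div_le_one hk]
    simpa [capG] using hcap .s (.lam i)
  case s.nu l p j =>
    rw [div_le_one (by positivity)]
    simpa [capG, mul_comm] using hcap .s (.nu j)
  case lam.mu l i p j =>
    split_ifs with hZ
    · rw [div_le_one (by positivity)]
      calc g (.lam i) (.mu j) ≤ k + 1 := by simpa [capG, hZ] using hcap (.lam i) (.mu j)
        _ ≤ (k + 1) * q := le_mul_of_one_le_right hk.le hq₁
    · have h0 : capG Z k q (.lam i) (.mu j) = 0 := by simp [capG, hZ]
      simp [hg.eq_zero_of_cap_eq_zero h0]
  case nu.mu l p i p' j =>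
    by_cases hZ : (j, Sum.inl i) ∈ Z
    · simp only [hZ, and_true]
      split_ifs
      · rw [div_le_one (by positivity)]
        simpa [capG, hZ, mul_comm] using hcap (.nu i) (.mu j)
      · exact le_rfl
    · have h0 : capG Z k q (.nu i) (.mu j) = 0 := by simp [capG, hZ]
      simp [hg.eq_zero_of_cap_eq_zero h0, hZ]
  case mu.t p j =>
    rw [div_le_one (by positivity)]
    simpa [capG] using hcap (.mu j) .t

theorem flowValue_splitFlow (hq : 0 < q) : flowValue .s (splitFlow k q g) = flowValue .s g := by
  have hk : (k + 1 : ℝ) ≠ 0 := Nat.cast_add_one_ne_zero k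
  have hq₀ : (q : ℝ) ≠ 0 := Nat.cast_ne_zero.2 hq.ne'
  rw [capG_flowValue hg]
  simp [flowValue, HNode.sum_eq, splitFlow, ← Finset.sum_div]
  field_simp

theorem isFlow_splitFlow (hq : 0 < q) : IsFlow (capH Z k q) .s .t (splitFlow k q g) :=
  ⟨splitFlow_nonneg hg, splitFlow_le_capH hg hq, splitFlow_conservation hg hq⟩

end Split

end Networks

theorem stmt5_general {n m : ℕ}
    (Z : Finset (Fin n × (Fin n ⊕ Fin m))) (k q : ℕ) (hq : 1 ≤ q) :
    maxFlow (capH Z k q) HNode.s HNode.t = maxFlow (capG Z k q) GNode.s GNode.t :=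
  maxFlow_eq_of_exists_flow
    (fun f hf => ⟨pushFlow HNode.proj f, isFlow_pushFlow_proj hf, flowValue_pushFlow_proj f⟩)
    (fun g hg => ⟨splitFlow k q g, isFlow_splitFlow hg hq, flowValue_splitFlow hg hq⟩)

/-- the maximum flow value `θ̂(k,q)` on the unit-capacity digraph `𝒢̂`
equals the maximum flow value `θ(k,q)` on the weighted digraph `𝒢`. -/
theorem stmt5 {n m : ℕ} (hn : 0 < n) (hm : 0 < m)
    (Z : Finset (Fin n × (Fin n ⊕ Fin m))) (k q : ℕ) (hq : 1 ≤ q) :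
    maxFlow (capH Z k q) HNode.s HNode.t = maxFlow (capG Z k q) GNode.s GNode.t :=
  stmt5_general Z k q hq
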